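/- Let m be a positive even integer, let β ≠ 0 and τ be real numbers, let 1 < α ≤ 2, let a < b be real numbers, and set μ_k = 2πk/(b − a). For each time level n ∈ ℕ let θ^{(n)}, θ′^{(n)} : {0,…,m−1} → ℝ be arbitrary real phase functions, and define Ψ^{n+1} from Ψ^n : {0,…,m−1} → ℂ by the Strang-split step: ψ*_j = exp(i·θ^{(n)}_j)·Ψ^n_j; ψ̂*_k = Σ_{j=0}^{m−1} ψ*_j · exp(−2πi·k·j/m); ψ**_j = (1/m)·Σ_{k=−m/2}^{m/2−1} exp(−(i/β)·|μ_k|^α·τ)·ψ̂*_k·exp(2πi·k·j/m); Ψ^{n+1}_j = exp(i·θ′^{(n)}_j)·ψ**_j. Then for every n ∈ ℕ, Σ_{j=0}^{m−1} |Ψ^n_j|² = Σ_{j=0}^{m−1} |Ψ^0_j|². -/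

import Mathlib

/-!
Each phase half-step multiplies every grid value by a number of modulus one, and so does the
Fourier multiplier `exp (-(i/β) |μ_k|^α τ)`, whose exponent is purely imaginary. The norm is
therefore conserved as soon as the forward and inverse transforms satisfy the discrete Parseval
identity. That identity holds because the characters `x ↦ ζ ^ (k * x)`, `ζ = exp (2πi/m)`, are
orthogonal over any `m` consecutive integers, and both `0, …, m - 1` and the frequency window
`-m/2, …, m/2 - 1` are such blocks.
-/
open Finset Complex
open scoped Real

theorem sum_norm_sq_sum_mul_of_orthogonal {𝕜 ι κ : Type*} [RCLike 𝕜] [DecidableEq ι]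
    {S : Finset ι} {T : Finset κ} {K : ι → κ → 𝕜} {c : ℝ}
    (hK : ∀ s ∈ S, ∀ s' ∈ S,
      ∑ t ∈ T, K s t * starRingEnd 𝕜 (K s' t) = if s = s' then (c : 𝕜) else 0)
    (g : ι → 𝕜) :
    ∑ t ∈ T, ‖∑ s ∈ S, g s * K s t‖ ^ 2 = c * ∑ s ∈ S, ‖g s‖ ^ 2 := by
  apply RCLike.ofReal_injective (K := 𝕜)
  push_cast
  simp_rw [← RCLike.mul_conj, map_sum, map_mul]
  calc ∑ t ∈ T, (∑ s ∈ S, g s * K s t) *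
          ∑ s' ∈ S, starRingEnd 𝕜 (g s') * starRingEnd 𝕜 (K s' t)
      = ∑ s ∈ S, ∑ s' ∈ S, g s * starRingEnd 𝕜 (g s') *
          ∑ t ∈ T, K s t * starRingEnd 𝕜 (K s' t) := by
        simp_rw [sum_mul_sum, mul_sum]
        rw [sum_comm]
        refine sum_congr rfl fun s _ => ?_
        rw [sum_comm]
        exact sum_congr rfl fun s' _ => sum_congr rfl fun t _ => by ring
    _ = (c : 𝕜) * ∑ s ∈ S, g s * starRingEnd 𝕜 (g s) := by
        rw [mul_sum]
        refine sum_congr rfl fun s hs => ?_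
        rw [sum_congr rfl fun s' hs' => by rw [hK s hs s' hs']]
        simp [hs, mul_comm]

theorem Int.dvd_sub_iff_eq_of_mem_Ico {c a b : ℤ} {m : ℕ} (ha : a ∈ Ico c (c + m))
    (hb : b ∈ Ico c (c + m)) : (m : ℤ) ∣ a - b ↔ a = b := by
  refine ⟨fun h => ?_, fun h => by rw [h, sub_self]; exact dvd_zero _⟩
  rw [mem_Ico] at ha hb
  have := Int.eq_zero_of_abs_lt_dvd h (by rw [abs_lt]; omega)
  omega

namespace IsPrimitiveRoot

section Field

variable {K : Type*} [Field K] {ζ : K} {m : ℕ}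

theorem sum_range_zpow_mul (hζ : IsPrimitiveRoot ζ m) (d : ℤ) :
    ∑ j ∈ range m, ζ ^ (d * j) = if (m : ℤ) ∣ d then (m : K) else 0 := by
  simp_rw [zpow_mul, zpow_natCast]
  split_ifs with hd
  · simp [(hζ.zpow_eq_one_iff_dvd d).2 hd]
  · have hpow : (ζ ^ d) ^ m = 1 := by
      rw [← zpow_natCast, ← zpow_mul, mul_comm, zpow_mul, zpow_natCast, hζ.pow_eq_one, one_zpow]
    rw [geom_sum_eq (mt (hζ.zpow_eq_one_iff_dvd d).1 hd), hpow, sub_self, zero_div]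

theorem sum_Ico_zpow_mul (hζ : IsPrimitiveRoot ζ m) (c d : ℤ) :
    ∑ x ∈ Ico c (c + m), ζ ^ (d * x) = if (m : ℤ) ∣ d then (m : K) else 0 := by
  rcases eq_or_ne m 0 with rfl | hm
  · simp
  rw [Int.Ico_eq_finset_map, sum_map, add_sub_cancel_left, Int.toNat_natCast]
  simp only [Function.Embedding.trans_apply, Nat.castEmbedding_apply, addLeftEmbedding_apply,
    mul_add, zpow_add₀ (hζ.ne_zero hm), ← mul_sum, hζ.sum_range_zpow_mul]
  split_ifs with hd
  · obtain ⟨e, rfl⟩ := hd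
    rw [mul_assoc, zpow_mul, zpow_natCast, hζ.pow_eq_one, one_zpow, one_mul]
  · rw [mul_zero]

end Field

variable {ζ : ℂ} {m : ℕ}

theorem conj_zpow (hζ : IsPrimitiveRoot ζ m) (hm : m ≠ 0) (x : ℤ) :
    starRingEnd ℂ (ζ ^ x) = ζ ^ (-x) := by
  rw [zpow_neg, inv_eq_conj (by rw [norm_zpow, hζ.norm'_eq_one hm, one_zpow])]

theorem sum_norm_sq_dft (hζ : IsPrimitiveRoot ζ m) (c : ℤ) (g : ℕ → ℂ) :
    ∑ k ∈ Ico c (c + m), ‖∑ j ∈ range m, g j * ζ ^ (-(k * j))‖ ^ 2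
      = m * ∑ j ∈ range m, ‖g j‖ ^ 2 := by
  rcases eq_or_ne m 0 with rfl | hm
  · simp
  refine sum_norm_sq_sum_mul_of_orthogonal (fun j hj j' hj' => ?_) g
  have hmem : ∀ i ∈ range m, (i : ℤ) ∈ Ico 0 (0 + (m : ℤ)) := fun i hi => by
    rw [mem_range] at hi; rw [mem_Ico]; omega
  have hkernel : ∀ k : ℤ, ζ ^ (-(k * j)) * starRingEnd ℂ (ζ ^ (-(k * j')))
      = ζ ^ (((j' : ℤ) - j) * k) := fun k => by
    rw [hζ.conj_zpow hm, ← zpow_add₀ (hζ.ne_zero hm)]; ring_nf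
  rw [sum_congr rfl fun k _ => hkernel k, hζ.sum_Ico_zpow_mul, RCLike.ofReal_natCast]
  exact if_congr ((Int.dvd_sub_iff_eq_of_mem_Ico (hmem j' hj') (hmem j hj)).trans
    (Nat.cast_inj.trans eq_comm)) rfl rfl

theorem sum_norm_sq_idft (hζ : IsPrimitiveRoot ζ m) (c : ℤ) (F : ℤ → ℂ) :
    ∑ j ∈ range m, ‖∑ k ∈ Ico c (c + m), F k * ζ ^ (k * j)‖ ^ 2
      = m * ∑ k ∈ Ico c (c + m), ‖F k‖ ^ 2 := by
  rcases eq_or_ne m 0 with rfl | hm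
  · simp
  refine sum_norm_sq_sum_mul_of_orthogonal (fun k hk k' hk' => ?_) F
  have hkernel : ∀ j : ℕ, ζ ^ (k * j) * starRingEnd ℂ (ζ ^ (k' * j)) = ζ ^ ((k - k') * j) :=
    fun j => by rw [hζ.conj_zpow hm, ← zpow_add₀ (hζ.ne_zero hm)]; ring_nf
  rw [sum_congr rfl fun j _ => hkernel j, hζ.sum_range_zpow_mul, RCLike.ofReal_natCast]
  exact if_congr (Int.dvd_sub_iff_eq_of_mem_Ico hk hk') rfl rfl

end IsPrimitiveRoot

theorem Int.Icc_neg_div_two_div_two_sub_one (m : ℕ) :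
    Icc (-(m : ℤ) / 2) ((m : ℤ) / 2 - 1) = Ico (-(m : ℤ) / 2) (-(m : ℤ) / 2 + m) := by
  ext k
  simp only [mem_Icc, mem_Ico]
  omega

theorem Complex.exp_two_pi_I_mul_int_div (m : ℕ) (x : ℤ) :
    exp (2 * π * I * x / m) = exp (2 * π * I / m) ^ x := by
  rw [← exp_int_mul]
  ring_nf

theorem sum_norm_sq_dft_exp {m : ℕ} (hm : m ≠ 0) (g : ℕ → ℂ) :
    ∑ k ∈ Icc (-(m : ℤ) / 2) ((m : ℤ) / 2 - 1),
        ‖∑ j ∈ range m, g j * exp (-(2 * π * I * k * j) / m)‖ ^ 2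
      = m * ∑ j ∈ range m, ‖g j‖ ^ 2 := by
  have hexp : ∀ k : ℤ, ∀ j : ℕ,
      exp (-(2 * π * I * k * j) / m) = exp (2 * π * I / m) ^ (-(k * j)) := fun k j => by
    rw [← exp_two_pi_I_mul_int_div]
    push_cast
    ring_nf
  simp only [hexp, Int.Icc_neg_div_two_div_two_sub_one,
    (isPrimitiveRoot_exp m hm).sum_norm_sq_dft]

theorem sum_norm_sq_idft_exp {m : ℕ} (hm : m ≠ 0) (F : ℤ → ℂ) :
    ∑ j ∈ range m, ‖1 / (m : ℂ) *
        ∑ k ∈ Icc (-(m : ℤ) / 2) ((m : ℤ) / 2 - 1), F k * exp (2 * π * I * k * j / m)‖ ^ 2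
      = 1 / m * ∑ k ∈ Icc (-(m : ℤ) / 2) ((m : ℤ) / 2 - 1), ‖F k‖ ^ 2 := by
  have hexp : ∀ k : ℤ, ∀ j : ℕ,
      exp (2 * π * I * k * j / m) = exp (2 * π * I / m) ^ (k * j) := fun k j => by
    rw [← exp_two_pi_I_mul_int_div]
    push_cast
    ring_nf
  simp only [norm_mul, norm_div, norm_one, norm_natCast, mul_pow, ← mul_sum, hexp,
    Int.Icc_neg_div_two_div_two_sub_one, (isPrimitiveRoot_exp m hm).sum_norm_sq_idft]
  field_simp

theorem norm_exp_I_mul_ofReal_mul (θ : ℝ) (z : ℂ) : ‖exp (I * θ) * z‖ = ‖z‖ := by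
  rw [norm_mul, norm_exp_I_mul_ofReal, one_mul]

theorem norm_exp_neg_I_div_ofReal_mul (β r τ : ℝ) : ‖exp (-(I / β * r * τ))‖ = 1 := by
  simp [norm_exp]

theorem tsfs_scheme_unconditionally_stable_general
    (m : ℕ) (hm : 0 < m)
    (β τ α : ℝ)
    (μ : ℤ → ℝ)
    (θ θ' : ℕ → ℕ → ℝ) (Ψ : ℕ → ℕ → ℂ) (ψstar ψss : ℕ → ℕ → ℂ) (ψhatstar : ℕ → ℤ → ℂ)
    (hstar : ∀ n : ℕ, ∀ j : ℕ, ψstar n j = Complex.exp (Complex.I * (θ n j : ℂ)) * Ψ n j)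
    (hhatstar : ∀ n : ℕ, ∀ k : ℤ, ψhatstar n k =
      ∑ j ∈ Finset.range m, ψstar n j *
        Complex.exp (-(2 * (Real.pi : ℂ) * Complex.I * (k : ℂ) * (j : ℂ)) / (m : ℂ)))
    (hss : ∀ n : ℕ, ∀ j : ℕ, ψss n j = (1 / (m : ℂ)) *
      ∑ k ∈ Finset.Icc (-(m : ℤ) / 2) ((m : ℤ) / 2 - 1),
        Complex.exp (-((Complex.I / (β : ℂ)) * ((|μ k| ^ α : ℝ) : ℂ) * (τ : ℂ))) *
          ψhatstar n k *
            Complex.exp (2 * (Real.pi : ℂ) * Complex.I * (k : ℂ) * (j : ℂ) / (m : ℂ)))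
    (hnew : ∀ n : ℕ, ∀ j : ℕ,
      Ψ (n + 1) j = Complex.exp (Complex.I * (θ' n j : ℂ)) * ψss n j) :
    ∀ n : ℕ, ∑ j ∈ Finset.range m, ‖Ψ n j‖ ^ 2
      = ∑ j ∈ Finset.range m, ‖Ψ 0 j‖ ^ 2 := by
  intro n
  induction n with
  | zero => rfl
  | succ n ih =>
    rw [← ih]
    calc ∑ j ∈ range m, ‖Ψ (n + 1) j‖ ^ 2 = ∑ j ∈ range m, ‖ψss n j‖ ^ 2 := by
          simp only [hnew, norm_exp_I_mul_ofReal_mul]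
      _ = 1 / m * ∑ k ∈ Icc (-(m : ℤ) / 2) ((m : ℤ) / 2 - 1), ‖ψhatstar n k‖ ^ 2 := by
          rw [sum_congr rfl fun j _ => by rw [hss], sum_norm_sq_idft_exp hm.ne']
          simp only [norm_mul, norm_exp_neg_I_div_ofReal_mul, one_mul]
      _ = ∑ j ∈ range m, ‖ψstar n j‖ ^ 2 := by
          rw [sum_congr rfl fun k _ => by rw [hhatstar], sum_norm_sq_dft_exp hm.ne']
          field_simp
      _ = ∑ j ∈ range m, ‖Ψ n j‖ ^ 2 := by
          simp only [hstar, norm_exp_I_mul_ofReal_mul]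

/-- **Theorem 6.1: unconditional stability of the TSFS scheme (case η = 0, β ≠ 0).**
At every time level `n`, one Strang-split step (nonlinear phase half-step, Fourier
multiplier step with multiplier `exp(−(i/β)·|μ_k|^α·τ)`, nonlinear phase half-step)
maps `Ψⁿ` to `Ψⁿ⁺¹`; then the discrete ℓ²-norm is conserved at every time step:
`Σ_j |Ψⁿ_j|² = Σ_j |Ψ⁰_j|²` for all `n`. -/
theorem tsfs_scheme_unconditionally_stable
    (m : ℕ) (hm : 0 < m) (hme : Even m)
    (β τ α a b : ℝ) (hβ : β ≠ 0) (hα1 : 1 < α) (hα2 : α ≤ 2) (hab : a < b)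
    (μ : ℤ → ℝ) (hμ : ∀ k : ℤ, μ k = 2 * Real.pi * (k : ℝ) / (b - a))
    (θ θ' : ℕ → ℕ → ℝ) (Ψ : ℕ → ℕ → ℂ) (ψstar ψss : ℕ → ℕ → ℂ) (ψhatstar : ℕ → ℤ → ℂ)
    (hstar : ∀ n : ℕ, ∀ j : ℕ, ψstar n j = Complex.exp (Complex.I * (θ n j : ℂ)) * Ψ n j)
    (hhatstar : ∀ n : ℕ, ∀ k : ℤ, ψhatstar n k =
      ∑ j ∈ Finset.range m, ψstar n j *
        Complex.exp (-(2 * (Real.pi : ℂ) * Complex.I * (k : ℂ) * (j : ℂ)) / (m : ℂ)))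
    (hss : ∀ n : ℕ, ∀ j : ℕ, ψss n j = (1 / (m : ℂ)) *
      ∑ k ∈ Finset.Icc (-(m : ℤ) / 2) ((m : ℤ) / 2 - 1),
        Complex.exp (-((Complex.I / (β : ℂ)) * ((|μ k| ^ α : ℝ) : ℂ) * (τ : ℂ))) *
          ψhatstar n k *
            Complex.exp (2 * (Real.pi : ℂ) * Complex.I * (k : ℂ) * (j : ℂ) / (m : ℂ)))
    (hnew : ∀ n : ℕ, ∀ j : ℕ,
      Ψ (n + 1) j = Complex.exp (Complex.I * (θ' n j : ℂ)) * ψss n j) :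
    ∀ n : ℕ, ∑ j ∈ Finset.range m, ‖Ψ n j‖ ^ 2
      = ∑ j ∈ Finset.range m, ‖Ψ 0 j‖ ^ 2 :=
  tsfs_scheme_unconditionally_stable_general m hm β τ α μ θ θ' Ψ ψstar ψss ψhatstar hstar hhatstar
    hss hnew
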